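/- arXiv:1404.6928 — 9 statements merged into one kernel-verified Lean document; each statement's English description precedes it below -/
import Mathlib

section
/- For every integer n ≥ 2, the operator Ω defined on bounded measurable functions F : [0,1] → ℝ by ΩF(x) = n·x^(n-1) − (n−1)·x^n − n·x^(n-1)·∫₀^(1−x) F(z) dz is a contraction in the supremum norm with contraction constant ((n−1)/n)^(n−1): for all bounded measurable F₁, F₂ : [0,1] → ℝ and all x ∈ [0,1], |ΩF₁(x) − ΩF₂(x)| ≤ ((n−1)/n)^(n−1) · sup_{z ∈ [0,1]} |F₁(z) − F₂(z)|, and moreover ((n−1)/n)^(n−1) < 1. -/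
/-!
Only the integral term depends on `F`, so `ΩF₁ x - ΩF₂ x = -n xⁿ⁻¹ ∫₀^{1-x} (F₁ - F₂)`, whose
absolute value is at most `n xⁿ⁻¹ (1 - x)` times the sup norm of `F₁ - F₂`. The polynomial
`n xⁿ⁻¹ (1 - x)` attains its maximum `((n - 1) / n)ⁿ⁻¹` on `[0, 1]` at `x = (n - 1) / n`; the
bound follows from Bernoulli's inequality in the form of the tangent-line estimate for `yⁿ`.
-/

open Set MeasureTheory

theorem pow_succ_add_mul_pow_mul_sub_le_pow_succ {a s : ℝ} (ha : 0 < a) (hs : -a ≤ s) (k : ℕ) :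
    a ^ (k + 1) + (k + 1) * a ^ k * (s - a) ≤ s ^ (k + 1) := by
  have hsa : -1 ≤ s / a := by rwa [le_div_iff₀ ha, neg_one_mul]
  have bernoulli := one_add_mul_sub_le_pow hsa (k + 1)
  calc a ^ (k + 1) + (k + 1) * a ^ k * (s - a)
      = a ^ (k + 1) * (1 + ((k + 1 : ℕ) : ℝ) * (s / a - 1)) := by
        push_cast; field_simp; ring
    _ ≤ a ^ (k + 1) * (s / a) ^ (k + 1) := by gcongr
    _ = s ^ (k + 1) := by rw [div_pow, mul_div_cancel₀ _ (by positivity)]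

theorem succ_mul_pow_mul_one_sub_le (m : ℕ) {x : ℝ} (hx : 0 ≤ x) :
    (m + 1) * x ^ m * (1 - x) ≤ ((m : ℝ) / (m + 1)) ^ m := by
  rcases Nat.eq_zero_or_pos m with rfl | hm
  · simpa using hx
  rcases hx.eq_or_lt with rfl | hx
  · simp only [ne_eq, hm.ne', not_false_eq_true, zero_pow, mul_zero, zero_mul]
    positivity
  -- the tangent to `y ^ (m + 1)` at `x`, evaluated at the maximiser `t = m / (m + 1)`
  set t : ℝ := m / (m + 1) with ht
  have htm : (m + 1) * t = m := by rw [ht]; field_simp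
  have tangent := pow_succ_add_mul_pow_mul_sub_le_pow_succ hx
    ((neg_nonpos.2 hx.le).trans (by positivity : (0 : ℝ) ≤ t)) m
  have hm' : (0 : ℝ) < m := by exact_mod_cast hm
  refine le_of_mul_le_mul_left ?_ hm'
  calc (m : ℝ) * ((m + 1) * x ^ m * (1 - x))
      = (m + 1) * (x ^ (m + 1) + (m + 1) * x ^ m * (t - x)) := by
        rw [pow_succ]; linear_combination -(m + 1) * x ^ m * htm
    _ ≤ (m + 1) * t ^ (m + 1) := by gcongr
    _ = m * t ^ m := by rw [pow_succ]; linear_combination t ^ m * htm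

theorem integrableOn_Icc_of_abs_le {F : ℝ → ℝ} (hF : Measurable F) {a b : ℝ}
    (hb : ∃ C : ℝ, ∀ x ∈ Icc a b, |F x| ≤ C) : IntegrableOn F (Icc a b) := by
  obtain ⟨C, hC⟩ := hb
  exact Measure.integrableOn_of_bounded measure_Icc_lt_top.ne hF.aestronglyMeasurable
    ((ae_restrict_mem measurableSet_Icc).mono hC)

theorem bddAbove_abs_sub_image {F₁ F₂ : ℝ → ℝ} {s : Set ℝ}
    (hb₁ : ∃ C : ℝ, ∀ x ∈ s, |F₁ x| ≤ C) (hb₂ : ∃ C : ℝ, ∀ x ∈ s, |F₂ x| ≤ C) :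
    BddAbove ((fun z => |F₁ z - F₂ z|) '' s) := by
  obtain ⟨C₁, hC₁⟩ := hb₁
  obtain ⟨C₂, hC₂⟩ := hb₂
  refine ⟨C₁ + C₂, forall_mem_image.2 fun z hz => ?_⟩
  exact (abs_sub _ _).trans (add_le_add (hC₁ z hz) (hC₂ z hz))

theorem stmt_0 (n : ℕ) (hn : 2 ≤ n)
    (F₁ F₂ : ℝ → ℝ) (hm₁ : Measurable F₁) (hm₂ : Measurable F₂)
    (hb₁ : ∃ C : ℝ, ∀ x ∈ Icc (0:ℝ) 1, |F₁ x| ≤ C)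
    (hb₂ : ∃ C : ℝ, ∀ x ∈ Icc (0:ℝ) 1, |F₂ x| ≤ C)
    (x : ℝ) (hx : x ∈ Icc (0:ℝ) 1) :
    |((n:ℝ) * x ^ (n-1) - ((n:ℝ) - 1) * x ^ n
        - (n:ℝ) * x ^ (n-1) * ∫ z in (0:ℝ)..(1 - x), F₁ z)
      - ((n:ℝ) * x ^ (n-1) - ((n:ℝ) - 1) * x ^ n
        - (n:ℝ) * x ^ (n-1) * ∫ z in (0:ℝ)..(1 - x), F₂ z)|
      ≤ (((n:ℝ) - 1) / n) ^ (n-1) * sSup ((fun z => |F₁ z - F₂ z|) '' Icc (0:ℝ) 1)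
    ∧ (((n:ℝ) - 1) / n) ^ (n-1) < 1 := by
  obtain ⟨hx₀, hx₁⟩ := hx
  obtain ⟨m, rfl⟩ : ∃ m, n = m + 1 := ⟨n - 1, by omega⟩
  simp only [Nat.add_sub_cancel, Nat.cast_add, Nat.cast_one, add_sub_cancel_right]
  set M := sSup ((fun z => |F₁ z - F₂ z|) '' Icc (0:ℝ) 1)
  have hM : ∀ z ∈ Icc (0:ℝ) 1, |F₁ z - F₂ z| ≤ M := fun z hz =>
    le_csSup (bddAbove_abs_sub_image hb₁ hb₂) (mem_image_of_mem _ hz)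
  have hsub : uIcc 0 (1 - x) ⊆ Icc (0:ℝ) 1 :=
    uIcc_subset_Icc (left_mem_Icc.2 zero_le_one) ⟨by linarith, by linarith⟩
  have hsplit : (∫ z in (0:ℝ)..(1 - x), F₁ z) - ∫ z in (0:ℝ)..(1 - x), F₂ z
      = ∫ z in (0:ℝ)..(1 - x), (F₁ z - F₂ z) :=
    (intervalIntegral.integral_sub
      ((integrableOn_Icc_of_abs_le hm₁ hb₁).mono_set hsub).intervalIntegrable
      ((integrableOn_Icc_of_abs_le hm₂ hb₂).mono_set hsub).intervalIntegrable).symm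
  have hbound : |∫ z in (0:ℝ)..(1 - x), (F₁ z - F₂ z)| ≤ M * (1 - x) := by
    simpa [abs_of_nonneg (sub_nonneg.2 hx₁)] using
      intervalIntegral.norm_integral_le_of_norm_le_const (f := fun z => F₁ z - F₂ z)
        fun z hz => hM z (hsub (uIoc_subset_uIcc hz))
  refine ⟨?_, pow_lt_one₀ (by positivity) ((div_lt_one (by positivity)).2 (by linarith))
    (by omega)⟩
  calc _ = |-((m + 1) * x ^ m * ∫ z in (0:ℝ)..(1 - x), (F₁ z - F₂ z))| := by
        rw [← hsplit]; ring_nf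
    _ = (m + 1) * x ^ m * |∫ z in (0:ℝ)..(1 - x), (F₁ z - F₂ z)| := by
        rw [abs_neg, abs_mul, abs_of_nonneg (by positivity)]
    _ ≤ (m + 1) * x ^ m * (1 - x) * M := by
        rw [mul_assoc _ (1 - x), mul_comm (1 - x)]; gcongr
    _ ≤ (m / (m + 1)) ^ m * M :=
        mul_le_mul_of_nonneg_right (succ_mul_pow_mul_one_sub_le m hx₀)
          ((abs_nonneg _).trans (hM 0 (left_mem_Icc.2 zero_le_one)))
end

section
/- For every integer n ≥ 2, there exists a unique bounded measurable function F : [0,1] → ℝ satisfying F(x) = n·x^(n-1) − (n−1)·x^n − n·x^(n-1)·∫₀^(1−x) F(z) dz for all x ∈ [0,1]. -/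
/-!
Write `Ω F = p - L F` with `L F x = n x^(n-1) ∫₀^(1-x) F`. If `|F| ≤ d` on `[0,1]` then
`|L F x| ≤ n x^(n-1) (1-x) d`, and feeding this bound through `L` once more gives
`|L (L F)| ≤ n · (∫₀¹ n z^(n-1) (1-z) dz) · d ≤ n/(n+1) · d`. So `Ω ∘ Ω` is a contraction of
`C([0,1])` and `Ω` has a unique continuous fixed point. A bounded measurable fixed point is
continuous on `[0,1]`, being a polynomial plus a polynomial times a primitive, so it is that one.
-/

open Set MeasureTheory unitInterval

/-- The operator `Ω`. -/
noncomputable def sojournOp (n : ℕ) (F : ℝ → ℝ) (x : ℝ) : ℝ :=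
  n * x ^ (n - 1) - ((n : ℝ) - 1) * x ^ n - n * x ^ (n - 1) * ∫ z in (0 : ℝ)..(1 - x), F z

lemma integral_zero_one_mul_pow_mul_one_sub_le (n : ℕ) :
    ∫ z in (0 : ℝ)..1, n * z ^ (n - 1) * (1 - z) ≤ 1 / (n + 1) := by
  cases n with
  | zero => simp
  | succ m =>
    have h (z : ℝ) :
        (m + 1 : ℕ) * z ^ (m + 1 - 1) * (1 - z) = (m + 1) * z ^ m - (m + 1) * z ^ (m + 1) := by
      push_cast; ring
    simp only [h]
    rw [intervalIntegral.integral_sub (Continuous.intervalIntegrable (by fun_prop) _ _)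
      (Continuous.intervalIntegrable (by fun_prop) _ _), intervalIntegral.integral_const_mul,
      intervalIntegral.integral_const_mul, integral_pow, integral_pow]
    field_simp
    norm_num

lemma integral_mul_pow_mul_one_sub_le (n : ℕ) {x : ℝ} (hx : x ∈ I) :
    ∫ z in (0 : ℝ)..(1 - x), n * z ^ (n - 1) * (1 - z) ≤ 1 / (n + 1) := by
  have hnonneg : ∀ z ∈ Ioc (0 : ℝ) 1, 0 ≤ n * z ^ (n - 1) * (1 - z) := fun z hz => by
    have := hz.1.le
    have := sub_nonneg.2 hz.2
    positivity
  refine (intervalIntegral.integral_mono_interval le_rfl (Icc.one_sub_mem hx).1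
    (Icc.one_sub_mem hx).2 ((ae_restrict_iff' measurableSet_Ioc).2 (ae_of_all _ hnonneg))
    (Continuous.intervalIntegrable (by fun_prop) _ _)).trans ?_
  exact integral_zero_one_mul_pow_mul_one_sub_le n

section

variable {F G : ℝ → ℝ} {x : ℝ}

lemma intervalIntegrable_zero_one_sub (hF : IntegrableOn F I) (hx : x ∈ I) :
    IntervalIntegrable F volume 0 (1 - x) :=
  (hF.mono_set (uIcc_subset_Icc (left_mem_Icc.2 zero_le_one) (Icc.one_sub_mem hx))).intervalIntegrable

lemma continuousOn_sojournOp (n : ℕ) (hF : IntegrableOn F I) : ContinuousOn (sojournOp n F) I := by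
  have hprim : ContinuousOn (fun t => ∫ z in (0 : ℝ)..t, F z) I := by
    simpa only [uIcc_of_le zero_le_one] using intervalIntegral.continuousOn_primitive_interval
      (a := 0) (b := 1) (by rwa [uIcc_of_le zero_le_one])
  have := hprim.comp (continuousOn_const.sub continuousOn_id) fun x hx => Icc.one_sub_mem hx
  exact (Continuous.continuousOn (by fun_prop)).sub ((Continuous.continuousOn (by fun_prop)).mul this)

lemma sojournOp_congr (n : ℕ) (h : EqOn F G I) (hx : x ∈ I) :
    sojournOp n F x = sojournOp n G x := by
  rw [sojournOp, sojournOp, intervalIntegral.integral_congr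
    (h.mono (uIcc_subset_Icc (left_mem_Icc.2 zero_le_one) (Icc.one_sub_mem hx)))]

lemma abs_sojournOp_sub_le (n : ℕ) {B : ℝ → ℝ} (hF : IntegrableOn F I) (hG : IntegrableOn G I)
    (hB : IntegrableOn B I) (hFG : ∀ z ∈ I, |F z - G z| ≤ B z) (hx : x ∈ I) :
    |sojournOp n F x - sojournOp n G x| ≤ n * x ^ (n - 1) * ∫ z in (0 : ℝ)..(1 - x), B z := by
  have hdiff : sojournOp n F x - sojournOp n G x
      = -(n * x ^ (n - 1) * ∫ z in (0 : ℝ)..(1 - x), (F z - G z)) := by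
    rw [intervalIntegral.integral_sub (intervalIntegrable_zero_one_sub hF hx)
      (intervalIntegrable_zero_one_sub hG hx), sojournOp, sojournOp]
    ring
  have hx0 : 0 ≤ x := hx.1
  rw [hdiff, abs_neg, abs_mul, abs_of_nonneg (by positivity)]
  gcongr
  simpa only [Real.norm_eq_abs] using intervalIntegral.norm_integral_le_of_norm_le
    (f := fun z => F z - G z) (Icc.one_sub_mem hx).1
    (ae_of_all _ fun z hz => hFG z ⟨hz.1.le, hz.2.trans (Icc.one_sub_mem hx).2⟩)
    (intervalIntegrable_zero_one_sub hB hx)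

end

lemma integrableOn_IccExtend (f : C(I, ℝ)) : IntegrableOn (IccExtend zero_le_one f) I :=
  f.continuous.Icc_extend'.integrableOn_Icc

/-- `Ω` on `C([0,1])`; the extension is immaterial since `sojournOp` reads its argument only on
`[0,1]`. -/
noncomputable def sojournMap (n : ℕ) (f : C(I, ℝ)) : C(I, ℝ) :=
  ⟨fun x => sojournOp n (IccExtend zero_le_one f) x,
    (continuousOn_sojournOp n (integrableOn_IccExtend f)).domRestrict⟩

lemma sojournMap_apply (n : ℕ) (f : C(I, ℝ)) (x : I) :
    sojournMap n f x = sojournOp n (IccExtend zero_le_one f) x := rfl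

lemma abs_sojournMap_sub_le (n : ℕ) (f g : C(I, ℝ)) (x : I) :
    |sojournMap n f x - sojournMap n g x| ≤ n * x ^ (n - 1) * (1 - x) * dist f g := by
  have := abs_sojournOp_sub_le n (integrableOn_IccExtend f) (integrableOn_IccExtend g)
    (integrableOn_const (C := dist f g) (by simp)) (fun z _ => ?_) x.2
  · simpa [sojournMap_apply, mul_assoc] using this
  · simpa [IccExtend, Real.dist_eq] using f.dist_apply_le_dist (g := g) (projIcc 0 1 zero_le_one z)

lemma dist_sojournMap_sojournMap_le (n : ℕ) (f g : C(I, ℝ)) :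
    dist (sojournMap n (sojournMap n f)) (sojournMap n (sojournMap n g)) ≤
      n / (n + 1) * dist f g := by
  set d := dist f g
  have hB (z : ℝ) (hz : z ∈ I) :
      |IccExtend zero_le_one (sojournMap n f) z - IccExtend zero_le_one (sojournMap n g) z| ≤
        n * z ^ (n - 1) * (1 - z) * d := by
    simpa only [IccExtend_of_mem _ _ hz] using abs_sojournMap_sub_le n f g ⟨z, hz⟩
  refine (ContinuousMap.dist_le (by positivity)).2 fun x => ?_
  have hx0 : 0 ≤ (x : ℝ) := x.2.1
  rw [Real.dist_eq, sojournMap_apply, sojournMap_apply]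
  calc _ ≤ n * (x : ℝ) ^ (n - 1) * ∫ z in (0 : ℝ)..(1 - x), n * z ^ (n - 1) * (1 - z) * d :=
        abs_sojournOp_sub_le n (integrableOn_IccExtend _) (integrableOn_IccExtend _)
          (Continuous.integrableOn_Icc (by fun_prop)) hB x.2
    _ = n * (x : ℝ) ^ (n - 1) * (∫ z in (0 : ℝ)..(1 - x), n * z ^ (n - 1) * (1 - z)) * d := by
        rw [intervalIntegral.integral_mul_const]; ring
    _ ≤ n * 1 * (1 / (n + 1)) * d := by
        gcongr ?_ * d
        exact mul_le_mul_of_nonneg (by gcongr; exact pow_le_one₀ hx0 x.2.2)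
          (integral_mul_pow_mul_one_sub_le n x.2) (by positivity) (by positivity)
    _ = n / (n + 1) * d := by ring

lemma contractingWith_sojournMap_iterate_two (n : ℕ) :
    ContractingWith ((n : NNReal) / (n + 1)) (sojournMap n)^[2] :=
  ⟨(div_lt_one (by positivity)).2 (lt_add_one _),
    LipschitzWith.of_dist_le_mul fun f g => by simpa using dist_sojournMap_sojournMap_le n f g⟩

lemma IccExtend_eq_sojournOp {n : ℕ} {f : C(I, ℝ)} (hf : sojournMap n f = f) {x : ℝ} (hx : x ∈ I) :
    IccExtend zero_le_one f x = sojournOp n (IccExtend zero_le_one f) x :=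
  calc _ = sojournMap n f ⟨x, hx⟩ := by rw [IccExtend_of_mem _ _ hx, hf]
    _ = _ := rfl

lemma exists_sojournMap_eq_self {n : ℕ} {G : ℝ → ℝ} (hGi : IntegrableOn G I)
    (hG : ∀ x ∈ I, G x = sojournOp n G x) :
    ∃ g : C(I, ℝ), sojournMap n g = g ∧ ∀ x : I, G x = g x := by
  refine ⟨⟨fun y => G y, ((continuousOn_sojournOp n hGi).congr hG).domRestrict⟩, ?_, fun _ => rfl⟩
  ext y
  exact (sojournOp_congr n (fun z hz => IccExtend_of_mem _ _ hz) y.2).trans (hG y y.2).symm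

theorem stmt_1_general (n : ℕ) :
    ∃ F : ℝ → ℝ,
      (Measurable F ∧ (∃ C : ℝ, ∀ x ∈ Icc (0:ℝ) 1, |F x| ≤ C) ∧
        ∀ x ∈ Icc (0:ℝ) 1,
          F x = (n:ℝ) * x ^ (n-1) - ((n:ℝ) - 1) * x ^ n
            - (n:ℝ) * x ^ (n-1) * ∫ z in (0:ℝ)..(1 - x), F z) ∧
      ∀ G : ℝ → ℝ,
        (Measurable G ∧ (∃ C : ℝ, ∀ x ∈ Icc (0:ℝ) 1, |G x| ≤ C) ∧
          ∀ x ∈ Icc (0:ℝ) 1,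
            G x = (n:ℝ) * x ^ (n-1) - ((n:ℝ) - 1) * x ^ n
              - (n:ℝ) * x ^ (n-1) * ∫ z in (0:ℝ)..(1 - x), G z) →
        ∀ x ∈ Icc (0:ℝ) 1, G x = F x := by
  have hK := contractingWith_sojournMap_iterate_two n
  set f := hK.fixedPoint (sojournMap n)^[2]
  have hf : sojournMap n f = f := hK.isFixedPt_fixedPoint_iterate
  refine ⟨IccExtend zero_le_one f, ⟨f.continuous.Icc_extend'.measurable,
    ⟨‖f‖, fun x _ => f.norm_coe_le_norm _⟩, fun x hx => IccExtend_eq_sojournOp hf hx⟩, ?_⟩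
  rintro G ⟨hGm, ⟨C, hC⟩, hG⟩ x hx
  have hGi : IntegrableOn G I :=
    Measure.integrableOn_of_bounded (M := C) measure_Icc_lt_top.ne hGm.aestronglyMeasurable
      ((ae_restrict_iff' measurableSet_Icc).2 (ae_of_all _ hC))
  obtain ⟨g, hg, hGg⟩ := exists_sojournMap_eq_self hGi hG
  have hgf : g = f := hK.fixedPoint_unique (show (sojournMap n)^[2] g = g by simp [hg])
  rw [hGg ⟨x, hx⟩, hgf, IccExtend_of_mem _ _ hx]

theorem stmt_1 (n : ℕ) (hn : 2 ≤ n) :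
    ∃ F : ℝ → ℝ,
      (Measurable F ∧ (∃ C : ℝ, ∀ x ∈ Icc (0:ℝ) 1, |F x| ≤ C) ∧
        ∀ x ∈ Icc (0:ℝ) 1,
          F x = (n:ℝ) * x ^ (n-1) - ((n:ℝ) - 1) * x ^ n
            - (n:ℝ) * x ^ (n-1) * ∫ z in (0:ℝ)..(1 - x), F z) ∧
      ∀ G : ℝ → ℝ,
        (Measurable G ∧ (∃ C : ℝ, ∀ x ∈ Icc (0:ℝ) 1, |G x| ≤ C) ∧
          ∀ x ∈ Icc (0:ℝ) 1,
            G x = (n:ℝ) * x ^ (n-1) - ((n:ℝ) - 1) * x ^ n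
              - (n:ℝ) * x ^ (n-1) * ∫ z in (0:ℝ)..(1 - x), G z) →
        ∀ x ∈ Icc (0:ℝ) 1, G x = F x :=
  stmt_1_general n
end

section
/- Let n ≥ 2 be an integer, let f : [0,1] → ℝ be a nonnegative integrable function with ∫₀¹ f(z) dz = 1, and let F(t) = ∫₀^t f(z) dz. Then for every x ∈ [0,1]: ∫₀¹ ( ∫₀^x min((x − y + z)/(1 − y), 1) · n(n−1)(1−y)·y^(n−2) dy ) f(z) dz = n·x^(n-1) − (n−1)·x^n − n·x^(n-1)·∫₀^(1−x) F(z) dz. -/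
/-!
For `y < 1`, `min ((x - y + z) / (1 - y)) 1 * (1 - y) = (1 - y) - max (1 - x - z) 0`, so the inner
integral is `n x^(n-1) - (n-1) x^n - n x^(n-1) (1 - x - z)⁺`. Integrating against `f` then leaves
`∫₀^(1-x) (1 - x - z) f z dz`, which is `∫₀^(1-x) F` by integration by parts (`F` is
absolutely continuous with derivative `f` almost everywhere).
-/

open Set MeasureTheory

theorem integral_natCast_mul_pow_sub_two {n : ℕ} (hn : 2 ≤ n) (x : ℝ) :
    ∫ y in (0:ℝ)..x, (n:ℝ) * ((n:ℝ) - 1) * y ^ (n - 2) = n * x ^ (n - 1) := by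
  obtain ⟨m, rfl⟩ := Nat.exists_eq_add_of_le' hn
  simp only [Nat.add_sub_cancel, Nat.add_succ_sub_one, intervalIntegral.integral_const_mul,
    integral_pow]
  push_cast
  field_simp
  ring

theorem integral_natCast_mul_one_sub_mul_pow_sub_two {n : ℕ} (hn : 2 ≤ n) (x : ℝ) :
    ∫ y in (0:ℝ)..x, (n:ℝ) * ((n:ℝ) - 1) * (1 - y) * y ^ (n - 2)
      = n * x ^ (n - 1) - ((n:ℝ) - 1) * x ^ n := by
  obtain ⟨m, rfl⟩ := Nat.exists_eq_add_of_le' hn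
  simp only [Nat.add_sub_cancel, Nat.add_succ_sub_one]
  push_cast
  have hsplit : ∀ y : ℝ, ((m:ℝ) + 2) * ((m:ℝ) + 2 - 1) * (1 - y) * y ^ m
      = ((m:ℝ) + 2) * ((m:ℝ) + 1) * y ^ m - ((m:ℝ) + 2) * ((m:ℝ) + 1) * y ^ (m + 1) :=
    fun y => by ring
  rw [intervalIntegral.integral_congr fun y _ => hsplit y,
    intervalIntegral.integral_sub (((continuous_pow _).intervalIntegrable _ _).const_mul _)
      (((continuous_pow _).intervalIntegrable _ _).const_mul _)]
  simp only [intervalIntegral.integral_const_mul, integral_pow]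
  push_cast
  field_simp
  ring

theorem min_div_one_mul_of_pos {α : Type*} [Field α] [LinearOrder α] [IsStrictOrderedRing α]
    {t c : α} (hc : 0 < c) : min (t / c) 1 * c = min t c := by
  rw [min_mul_of_nonneg _ _ hc.le, div_mul_cancel₀ _ hc.ne', one_mul]

theorem integral_min_div_mul_one_sub_mul_pow_sub_two {n : ℕ} (hn : 2 ≤ n) {x : ℝ}
    (hx1 : x ≤ 1) (z : ℝ) :
    ∫ y in (0:ℝ)..x, (if y = 1 then 1 else min ((x - y + z) / (1 - y)) 1)
        * ((n:ℝ) * ((n:ℝ) - 1) * (1 - y) * y ^ (n - 2))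
      = n * x ^ (n - 1) - ((n:ℝ) - 1) * x ^ n - n * x ^ (n - 1) * max (1 - x - z) 0 := by
  have hne : ∀ᵐ y : ℝ, y ≠ 1 := by simp [ae_iff, measure_singleton]
  calc _ = ∫ y in (0:ℝ)..x, ((n:ℝ) * ((n:ℝ) - 1) * (1 - y) * y ^ (n - 2)
        - max (1 - x - z) 0 * ((n:ℝ) * ((n:ℝ) - 1) * y ^ (n - 2))) := by
        refine intervalIntegral.integral_congr_ae ?_
        filter_upwards [hne] with y hy1 hy
        have hy : 0 < 1 - y := sub_pos.2 ((hy.2.trans (max_le zero_le_one hx1)).lt_of_ne hy1)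
        have hmin : min (x - y + z) (1 - y) = 1 - y - max (1 - x - z) 0 := by
          rw [← min_sub_sub_left, sub_zero]
          congr 1
          ring
        calc _ = min ((x - y + z) / (1 - y)) 1 * (1 - y)
              * ((n:ℝ) * ((n:ℝ) - 1) * y ^ (n - 2)) := by
              rw [if_neg hy1]
              ring
          _ = _ := by
              rw [min_div_one_mul_of_pos hy, hmin]
              ring
    _ = _ := by
        rw [intervalIntegral.integral_sub (Continuous.intervalIntegrable (by fun_prop) _ _)
          (Continuous.intervalIntegrable (by fun_prop) _ _), intervalIntegral.integral_const_mul,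
          integral_natCast_mul_pow_sub_two hn, integral_natCast_mul_one_sub_mul_pow_sub_two hn]
        ring

theorem integral_integral_eq_integral_sub_mul {f : ℝ → ℝ} {a b : ℝ}
    (hf : IntervalIntegrable f volume a b) :
    ∫ t in a..b, (∫ u in a..t, f u) = ∫ u in a..b, (b - u) * f u := by
  have hF := hf.absolutelyContinuousOnInterval_intervalIntegral (c := a) left_mem_uIcc
  have hg : AbsolutelyContinuousOnInterval (fun t => t - b) a b :=
    ContDiffOn.absolutelyContinuousOnInterval (by fun_prop)
  have hparts := hF.integral_mul_deriv_eq_deriv_mul hg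
  have hderiv : ∀ t, deriv (fun t => t - b) t = 1 := fun t => by simp
  simp only [hderiv, mul_one, sub_self, mul_zero, intervalIntegral.integral_same, zero_mul,
    zero_sub] at hparts
  rw [hparts, ← intervalIntegral.integral_neg]
  refine intervalIntegral.integral_congr_ae ?_
  filter_upwards [hf.ae_hasDerivAt_integral] with u hu hmem
  rw [(hu (uIoc_subset_uIcc hmem) a left_mem_uIcc).deriv]
  ring

theorem integral_max_sub_zero_mul {f : ℝ → ℝ} {a b c : ℝ} (hab : a ≤ b) (hbc : b ≤ c)
    (hf : IntervalIntegrable f volume a c) :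
    ∫ z in a..c, max (b - z) 0 * f z = ∫ z in a..b, (b - z) * f z := by
  have hmono : ∀ {s t}, s ∈ uIcc a c → t ∈ uIcc a c → IntervalIntegrable
      (fun z => max (b - z) 0 * f z) volume s t := fun hs ht =>
    (hf.mono_set (uIcc_subset_uIcc hs ht)).continuousOn_mul (by fun_prop)
  have hb : b ∈ uIcc a c := by rw [uIcc_of_le (hab.trans hbc)]; exact ⟨hab, hbc⟩
  rw [← intervalIntegral.integral_add_adjacent_intervals (hmono left_mem_uIcc hb)
    (hmono hb right_mem_uIcc)]
  have hright : ∫ z in b..c, max (b - z) 0 * f z = 0 := by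
    refine (intervalIntegral.integral_congr fun z hz => ?_).trans intervalIntegral.integral_zero
    rw [uIcc_of_le hbc] at hz
    simp [max_eq_right (sub_nonpos.2 hz.1)]
  rw [hright, add_zero]
  refine intervalIntegral.integral_congr fun z hz => ?_
  rw [uIcc_of_le hab] at hz
  simp only [max_eq_left (sub_nonneg.2 hz.2)]

theorem stmt_4_general (n : ℕ) (hn : 2 ≤ n) (f : ℝ → ℝ)
    (hfi : MeasureTheory.IntegrableOn f (Icc (0:ℝ) 1))
    (hf1 : (∫ z in (0:ℝ)..1, f z) = 1)
    (F : ℝ → ℝ) (hF : ∀ t, F t = ∫ z in (0:ℝ)..t, f z)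
    (x : ℝ) (hx : x ∈ Icc (0:ℝ) 1) :
    (∫ z in (0:ℝ)..1,
        (∫ y in (0:ℝ)..x,
          (if y = 1 then 1 else min ((x - y + z) / (1 - y)) 1)
            * ((n:ℝ) * ((n:ℝ) - 1) * (1 - y) * y ^ (n-2))) * f z)
      = (n:ℝ) * x ^ (n-1) - ((n:ℝ) - 1) * x ^ n
        - (n:ℝ) * x ^ (n-1) * ∫ z in (0:ℝ)..(1 - x), F z := by
  obtain ⟨hx0, hx1⟩ := hx
  set G := (n:ℝ) * x ^ (n-1) - ((n:ℝ) - 1) * x ^ n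
  have hf : IntervalIntegrable f volume 0 1 :=
    (intervalIntegrable_iff_integrableOn_Icc_of_le zero_le_one).2 hfi
  have hfx : IntervalIntegrable f volume 0 (1 - x) :=
    (intervalIntegrable_iff_integrableOn_Icc_of_le (by linarith)).2
      (hfi.mono_set (Icc_subset_Icc le_rfl (by linarith)))
  simp only [integral_min_div_mul_one_sub_mul_pow_sub_two hn hx1, hF]
  rw [integral_integral_eq_integral_sub_mul hfx,
    ← integral_max_sub_zero_mul (by linarith) (by linarith) hf]
  calc _ = ∫ z in (0:ℝ)..1, (G * f z - n * x ^ (n - 1) * (max (1 - x - z) 0 * f z)) :=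
        intervalIntegral.integral_congr fun z _ => by ring
    _ = _ := by
        rw [intervalIntegral.integral_sub (hf.const_mul G)
            ((hf.continuousOn_mul (by fun_prop)).const_mul _),
          intervalIntegral.integral_const_mul, intervalIntegral.integral_const_mul, hf1, mul_one]

theorem stmt_4 (n : ℕ) (hn : 2 ≤ n) (f : ℝ → ℝ)
    (hf0 : ∀ z ∈ Icc (0:ℝ) 1, 0 ≤ f z)
    (hfi : MeasureTheory.IntegrableOn f (Icc (0:ℝ) 1))
    (hf1 : (∫ z in (0:ℝ)..1, f z) = 1)
    (F : ℝ → ℝ) (hF : ∀ t, F t = ∫ z in (0:ℝ)..t, f z)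
    (x : ℝ) (hx : x ∈ Icc (0:ℝ) 1) :
    (∫ z in (0:ℝ)..1,
        (∫ y in (0:ℝ)..x,
          (if y = 1 then 1 else min ((x - y + z) / (1 - y)) 1)
            * ((n:ℝ) * ((n:ℝ) - 1) * (1 - y) * y ^ (n-2))) * f z)
      = (n:ℝ) * x ^ (n-1) - ((n:ℝ) - 1) * x ^ n
        - (n:ℝ) * x ^ (n-1) * ∫ z in (0:ℝ)..(1 - x), F z :=
  stmt_4_general n hn f hfi hf1 F hF x hx
end

section
/- Let n ≥ 2 be an integer, let f : [0,1] → ℝ be a nonnegative integrable function with ∫₀¹ f(z) dz = 1, and let F(t) = ∫₀^t f(z) dz. Then for every x ∈ [0,1]: ∫₀¹ ( ∫₀^x min(2(x − y + z)/(1 − y), 1) · n(n−1)(1−y)·y^(n−2) dy ) f(z) dz = n·x^(n-1) − (n−1)·x^n − 2n(n−1)·∫_{max(2x−1, 0)}^{x} y^(n−2) · ( ∫₀^{(1+y)/2 − x} F(z) dz ) dy. -/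
/-!
Multiplying the conditional cdf of `B` by `1 - y` turns it into `(1 - y) - (1 + y - 2x - 2z)⁺`,
so the inner integral is the cdf `n x^(n-1) - (n-1) x^n` of `A` minus a correction term.
After Fubini the correction is a `y`-integral of `2 ∫ (t - z)⁺ f(z) dz` with `t = (1 + y)/2 - x`;
this vanishes when `t ≤ 0`, i.e. `y ≤ 2x - 1`, and otherwise equals `2 ∫₀ᵗ F` by Cauchy's
formula for repeated integration.
-/

open Set MeasureTheory

lemma setIntegral_Ioc_sub_mul_eq_integral_integral {f : ℝ → ℝ} {a t : ℝ} (hat : a ≤ t)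
    (hf : IntegrableOn f (Ioc a t)) :
    ∫ z in Ioc a t, (t - z) * f z = ∫ s in a..t, ∫ z in a..s, f z := by
  set g : ℝ × ℝ → ℝ := {q | q.1 ≤ q.2}.indicator fun q => f q.1
  have hg : Integrable g ((volume.restrict (Ioc a t)).prod (volume.restrict (Ioc a t))) :=
    (hf.comp_fst _).indicator (measurableSet_le measurable_fst measurable_snd)
  have h_section_z : ∀ z ∈ Ioc a t, ∫ s in Ioc a t, g (z, s) = (t - z) * f z := by
    intro z hz
    have hsec : (fun s => g (z, s)) = (Ici z).indicator fun _ => f z := by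
      funext s; simp [g, indicator_apply]
    have hset : Ioc a t ∩ Ici z = Icc z t := by
      ext s; simp only [mem_inter_iff, mem_Ioc, mem_Ici, mem_Icc]
      constructor
      · rintro ⟨⟨-, hst⟩, hzs⟩; exact ⟨hzs, hst⟩
      · rintro ⟨hzs, hst⟩; exact ⟨⟨hz.1.trans_le hzs, hst⟩, hzs⟩
    rw [hsec, setIntegral_indicator measurableSet_Ici, hset, setIntegral_const,
      Real.volume_real_Icc_of_le hz.2, smul_eq_mul]
  have h_section_s : ∀ s ∈ Ioc a t, ∫ z in Ioc a t, g (z, s) = ∫ z in a..s, f z := by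
    intro s hs
    have hsec : (fun z => g (z, s)) = (Iic s).indicator f := by
      funext z; simp [g, indicator_apply]
    rw [hsec, setIntegral_indicator measurableSet_Iic, Ioc_inter_Iic, inf_eq_right.mpr hs.2,
      intervalIntegral.integral_of_le hs.1.le]
  calc ∫ z in Ioc a t, (t - z) * f z = ∫ z in Ioc a t, ∫ s in Ioc a t, g (z, s) :=
        (setIntegral_congr_fun measurableSet_Ioc h_section_z).symm
    _ = ∫ s in Ioc a t, ∫ z in Ioc a t, g (z, s) := integral_integral_swap hg
    _ = ∫ s in a..t, ∫ z in a..s, f z := by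
      rw [setIntegral_congr_fun measurableSet_Ioc h_section_s, intervalIntegral.integral_of_le hat]

lemma setIntegral_max_sub_mul_eq_integral_integral {f : ℝ → ℝ} {a b t : ℝ} (hat : a ≤ t)
    (htb : t ≤ b) (hf : IntegrableOn f (Ioc a b)) :
    ∫ z in Ioc a b, max (t - z) 0 * f z = ∫ s in a..t, ∫ z in a..s, f z := by
  rw [setIntegral_eq_of_subset_of_forall_sdiff_eq_zero measurableSet_Ioc
      (Ioc_subset_Ioc_right htb) fun z hz => ?_,
    ← setIntegral_Ioc_sub_mul_eq_integral_integral hat (hf.mono_set (Ioc_subset_Ioc_right htb))]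
  · exact setIntegral_congr_fun measurableSet_Ioc fun z hz => by
      rw [max_eq_left (sub_nonneg.mpr hz.2)]
  · have htz : t < z := lt_of_not_ge fun h => hz.2 ⟨hz.1.1, h⟩
    rw [max_eq_right (by linarith), zero_mul]

lemma setIntegral_max_sub_mul_eq_zero {f : ℝ → ℝ} {a b t : ℝ} (hta : t ≤ a) :
    ∫ z in Ioc a b, max (t - z) 0 * f z = 0 := by
  rw [setIntegral_congr_fun measurableSet_Ioc fun z hz => by
      rw [max_eq_right (by linarith [hz.1]), zero_mul], integral_zero]

lemma integral_mul_one_sub_mul_pow_eq {n : ℕ} (hn : 2 ≤ n) (x : ℝ) :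
    ∫ y in (0:ℝ)..x, (n:ℝ) * ((n:ℝ) - 1) * (1 - y) * y ^ (n - 2)
      = n * x ^ (n - 1) - (n - 1) * x ^ n := by
  obtain ⟨p, rfl⟩ : ∃ p, n = p + 2 := ⟨n - 2, by omega⟩
  have hexpand :
      (fun y : ℝ => ((p + 2 : ℕ) : ℝ) * (((p + 2 : ℕ) : ℝ) - 1) * (1 - y) * y ^ (p + 2 - 2))
      = fun y => ((p:ℝ) + 2) * (p + 1) * y ^ p - (p + 2) * (p + 1) * y ^ (p + 1) := by
    funext y; rw [Nat.add_sub_cancel]; push_cast; ring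
  rw [hexpand, intervalIntegral.integral_sub
      ((by fun_prop : Continuous _).intervalIntegrable _ _)
      ((by fun_prop : Continuous _).intervalIntegrable _ _),
    intervalIntegral.integral_const_mul, intervalIntegral.integral_const_mul,
    integral_pow, integral_pow, show p + 2 - 1 = p + 1 by omega]
  push_cast
  field_simp
  ring

lemma ite_min_mul_one_sub_eq {x y z : ℝ} (hyx : y ≤ x) (hx1 : x ≤ 1) (hz : 0 ≤ z) :
    (if y = 1 then 1 else min (2 * (x - y + z) / (1 - y)) 1) * (1 - y)
      = (1 - y) - max (1 + y - 2 * x - 2 * z) 0 := by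
  split_ifs with hy1
  · subst hy1
    rw [le_antisymm hx1 hyx, max_eq_right (by linarith)]
    ring
  · have hpos : 0 < 1 - y := sub_pos.mpr (lt_of_le_of_ne (hyx.trans hx1) hy1)
    rcases le_total (2 * (x - y + z)) (1 - y) with h | h
    · rw [min_eq_left ((div_le_one hpos).mpr h), div_mul_cancel₀ _ hpos.ne',
        max_eq_left (by linarith)]
      ring
    · rw [min_eq_right ((one_le_div hpos).mpr h), max_eq_right (by linarith)]
      ring

lemma integral_cdf_mul_density_eq {n : ℕ} (hn : 2 ≤ n) {x z : ℝ} (hx : x ∈ Icc (0:ℝ) 1)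
    (hz : 0 ≤ z) :
    ∫ y in (0:ℝ)..x, (if y = 1 then 1 else min (2 * (x - y + z) / (1 - y)) 1)
        * ((n:ℝ) * ((n:ℝ) - 1) * (1 - y) * y ^ (n - 2))
      = n * x ^ (n - 1) - (n - 1) * x ^ n
        - n * (n - 1) * ∫ y in (0:ℝ)..x, y ^ (n - 2) * max (1 + y - 2 * x - 2 * z) 0 := by
  have hcongr : EqOn
      (fun y => (if y = 1 then 1 else min (2 * (x - y + z) / (1 - y)) 1)
        * ((n:ℝ) * ((n:ℝ) - 1) * (1 - y) * y ^ (n - 2)))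
      (fun y => (n:ℝ) * ((n:ℝ) - 1) * (1 - y) * y ^ (n - 2)
        - n * (n - 1) * (y ^ (n - 2) * max (1 + y - 2 * x - 2 * z) 0)) (uIcc 0 x) := by
    intro y hy
    rw [uIcc_of_le hx.1] at hy
    linear_combination ((n:ℝ) * (n - 1) * y ^ (n - 2)) * ite_min_mul_one_sub_eq hy.2 hx.2 hz
  rw [intervalIntegral.integral_congr hcongr, intervalIntegral.integral_sub
      ((by fun_prop : Continuous _).intervalIntegrable _ _)
      ((by fun_prop : Continuous _).intervalIntegrable _ _),
    integral_mul_one_sub_mul_pow_eq hn, intervalIntegral.integral_const_mul]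

lemma integrable_ramp_mul_prod (k : ℕ) {f : ℝ → ℝ} (hf : IntegrableOn f (Ioc 0 1)) {x : ℝ}
    (hx1 : x ≤ 1) :
    Integrable (fun q : ℝ × ℝ => q.2 ^ k * max (1 + q.2 - 2 * x - 2 * q.1) 0 * f q.1)
      ((volume.restrict (Ioc 0 1)).prod (volume.restrict (Ioc 0 x))) := by
  refine (hf.comp_fst _).bdd_mul (c := 2) (by fun_prop : Continuous _).aestronglyMeasurable ?_
  rw [Measure.prod_restrict]
  filter_upwards [ae_restrict_mem (measurableSet_Ioc.prod measurableSet_Ioc)]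
    with ⟨z, y⟩ ⟨hz, hy⟩
  rw [Real.norm_eq_abs, abs_of_nonneg (mul_nonneg (pow_nonneg hy.1.le k) (le_max_right _ _))]
  calc y ^ k * max (1 + y - 2 * x - 2 * z) 0
      ≤ 1 * 2 := mul_le_mul (pow_le_one₀ hy.1.le (hy.2.trans hx1))
        (max_le (by linarith [hz.1, hy.2, hy.1]) zero_le_two) (le_max_right _ _) zero_le_one
    _ = 2 := one_mul 2

lemma setIntegral_ramp_mul_eq (k : ℕ) (f : ℝ → ℝ) (x y : ℝ) :
    ∫ z in Ioc (0:ℝ) 1, y ^ k * max (1 + y - 2 * x - 2 * z) 0 * f z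
      = 2 * y ^ k * ∫ z in Ioc (0:ℝ) 1, max ((1 + y) / 2 - x - z) 0 * f z := by
  rw [← integral_const_mul]
  congr 1 with z
  rw [show max (1 + y - 2 * x - 2 * z) 0 = 2 * max ((1 + y) / 2 - x - z) 0 by
    rw [mul_max_of_nonneg _ _ zero_le_two]; ring_nf]
  ring

lemma integral_integral_ramp_mul_eq (k : ℕ) {f F : ℝ → ℝ} (hf : IntegrableOn f (Ioc 0 1))
    (hF : ∀ t, F t = ∫ z in (0:ℝ)..t, f z) {x : ℝ} (hx : x ∈ Icc (0:ℝ) 1) :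
    ∫ z in Ioc (0:ℝ) 1, (∫ y in (0:ℝ)..x, y ^ k * max (1 + y - 2 * x - 2 * z) 0) * f z
      = 2 * ∫ y in (max (2 * x - 1) 0)..x, y ^ k * ∫ z in (0:ℝ)..((1 + y) / 2 - x), F z := by
  have hmx : max (2 * x - 1) 0 ≤ x := max_le (by linarith [hx.2]) hx.1
  have hvanish : ∀ y ∈ Ioc 0 x \ Ioc (max (2 * x - 1) 0) x,
      ∫ z in Ioc (0:ℝ) 1, y ^ k * max (1 + y - 2 * x - 2 * z) 0 * f z = 0 := by
    rintro y ⟨⟨hy0, hyx⟩, hy⟩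
    have hy2x : y ≤ 2 * x - 1 := by
      rcases le_max_iff.mp (le_of_not_gt fun h => hy ⟨h, hyx⟩) with h | h
      exacts [h, absurd h (not_le.mpr hy0)]
    rw [setIntegral_ramp_mul_eq, setIntegral_max_sub_mul_eq_zero (by linarith), mul_zero]
  have hsection : ∀ y ∈ Ioc (max (2 * x - 1) 0) x,
      ∫ z in Ioc (0:ℝ) 1, y ^ k * max (1 + y - 2 * x - 2 * z) 0 * f z
        = 2 * (y ^ k * ∫ z in (0:ℝ)..((1 + y) / 2 - x), F z) := by
    rintro y ⟨hmy, hyx⟩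
    rw [max_lt_iff] at hmy
    rw [setIntegral_ramp_mul_eq, setIntegral_max_sub_mul_eq_integral_integral
      (by linarith) (by linarith [hx.1]) hf, funext hF, mul_assoc]
  calc ∫ z in Ioc (0:ℝ) 1, (∫ y in (0:ℝ)..x, y ^ k * max (1 + y - 2 * x - 2 * z) 0) * f z
      = ∫ z in Ioc (0:ℝ) 1, ∫ y in Ioc 0 x, y ^ k * max (1 + y - 2 * x - 2 * z) 0 * f z := by
        simp only [intervalIntegral.integral_of_le hx.1, integral_mul_const]
    _ = ∫ y in Ioc 0 x, ∫ z in Ioc (0:ℝ) 1, y ^ k * max (1 + y - 2 * x - 2 * z) 0 * f z :=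
        integral_integral_swap (integrable_ramp_mul_prod k hf hx.2)
    _ = ∫ y in Ioc (max (2 * x - 1) 0) x,
          ∫ z in Ioc (0:ℝ) 1, y ^ k * max (1 + y - 2 * x - 2 * z) 0 * f z :=
        setIntegral_eq_of_subset_of_forall_sdiff_eq_zero measurableSet_Ioc
          (Ioc_subset_Ioc_left (le_max_right _ _)) hvanish
    _ = 2 * ∫ y in (max (2 * x - 1) 0)..x, y ^ k * ∫ z in (0:ℝ)..((1 + y) / 2 - x), F z := by
        rw [setIntegral_congr_fun measurableSet_Ioc hsection, integral_const_mul,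
          intervalIntegral.integral_of_le hmx]

theorem stmt_5_general (n : ℕ) (hn : 2 ≤ n) (f : ℝ → ℝ)
    (hfi : MeasureTheory.IntegrableOn f (Icc (0:ℝ) 1))
    (hf1 : (∫ z in (0:ℝ)..1, f z) = 1)
    (F : ℝ → ℝ) (hF : ∀ t, F t = ∫ z in (0:ℝ)..t, f z)
    (x : ℝ) (hx : x ∈ Icc (0:ℝ) 1) :
    (∫ z in (0:ℝ)..1,
        (∫ y in (0:ℝ)..x,
          (if y = 1 then 1 else min (2 * (x - y + z) / (1 - y)) 1)
            * ((n:ℝ) * ((n:ℝ) - 1) * (1 - y) * y ^ (n-2))) * f z)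
      = (n:ℝ) * x ^ (n-1) - ((n:ℝ) - 1) * x ^ n
        - 2 * (n:ℝ) * ((n:ℝ) - 1) *
          ∫ y in (max (2*x - 1) 0)..x, y ^ (n-2) * ∫ z in (0:ℝ)..((1 + y)/2 - x), F z := by
  have hf : IntegrableOn f (Ioc 0 1) := hfi.mono_set Ioc_subset_Icc_self
  have hGf : IntegrableOn (fun z =>
      (∫ y in (0:ℝ)..x, y ^ (n - 2) * max (1 + y - 2 * x - 2 * z) 0) * f z) (Ioc 0 1) := by
    have h := (integrable_ramp_mul_prod (n - 2) hf hx.2).integral_prod_left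
    simp only [integral_mul_const] at h
    simp only [intervalIntegral.integral_of_le hx.1]
    exact h
  rw [intervalIntegral.integral_of_le zero_le_one,
    setIntegral_congr_fun measurableSet_Ioc fun z hz => by
      rw [integral_cdf_mul_density_eq hn hx hz.1.le, sub_mul, mul_assoc],
    integral_sub (hf.const_mul _) (hGf.const_mul _), integral_const_mul, integral_const_mul,
    integral_integral_ramp_mul_eq (n - 2) hf hF hx, ← intervalIntegral.integral_of_le zero_le_one,
    hf1]
  ring

theorem stmt_5 (n : ℕ) (hn : 2 ≤ n) (f : ℝ → ℝ)
    (hf0 : ∀ z ∈ Icc (0:ℝ) 1, 0 ≤ f z)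
    (hfi : MeasureTheory.IntegrableOn f (Icc (0:ℝ) 1))
    (hf1 : (∫ z in (0:ℝ)..1, f z) = 1)
    (F : ℝ → ℝ) (hF : ∀ t, F t = ∫ z in (0:ℝ)..t, f z)
    (x : ℝ) (hx : x ∈ Icc (0:ℝ) 1) :
    (∫ z in (0:ℝ)..1,
        (∫ y in (0:ℝ)..x,
          (if y = 1 then 1 else min (2 * (x - y + z) / (1 - y)) 1)
            * ((n:ℝ) * ((n:ℝ) - 1) * (1 - y) * y ^ (n-2))) * f z)
      = (n:ℝ) * x ^ (n-1) - ((n:ℝ) - 1) * x ^ n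
        - 2 * (n:ℝ) * ((n:ℝ) - 1) *
          ∫ y in (max (2*x - 1) 0)..x, y ^ (n-2) * ∫ z in (0:ℝ)..((1 + y)/2 - x), F z :=
  stmt_5_general n hn f hfi hf1 F hF x hx
end

section
/- Let n ≥ 3 be an integer and let t⁺ denote max(t,0). Then for every y ∈ [0,1]: ∫₀^{(1−y)/2} 2n·( y^(n−1) + ((y − 2x)⁺)^(n−1) − ((2y − 1)⁺)^(n−1) ) dx + ∫_{(1−y)/2}^{1/2} 2n·(1 − 2x)^(n−1) dx = 2·y^n + n·y^(n−1)·(1 − y) − ((2y − 1)⁺)^n − n·((2y − 1)⁺)^(n−1)·(1 − y). -/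
open Set

/-! Since `n ≥ 2`, the map `t ↦ (t⁺)ⁿ` is `C¹` with derivative `n (t⁺)ⁿ⁻¹`, so every integral in the
statement is evaluated in closed form by the fundamental theorem of calculus, with no case split on
the sign of `2y - 1`: the term `(y - 2x)⁺` integrates to `yⁿ - ((2y - 1)⁺)ⁿ` over `[0, (1 - y)/2]`. -/

lemma hasDerivAt_max_zero_pow {n : ℕ} (hn : 2 ≤ n) (t : ℝ) :
    HasDerivAt (fun s : ℝ => max s 0 ^ n) (n * max t 0 ^ (n - 1)) t := by
  have hne : ∀ s ≠ (0 : ℝ), HasDerivAt (fun s : ℝ => max s 0 ^ n) (n * max s 0 ^ (n - 1)) s := by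
    intro s hs
    rcases hs.lt_or_gt with hs | hs
    · have hzero : (fun s : ℝ => max s 0 ^ n) =ᶠ[nhds s] fun _ => 0 := by
        filter_upwards [gt_mem_nhds hs] with r hr
        simp [max_eq_right hr.le, zero_pow (by omega : n ≠ 0)]
      simpa [max_eq_right hs.le, zero_pow (by omega : n - 1 ≠ 0)] using
        (hasDerivAt_const s (0 : ℝ)).congr_of_eventuallyEq hzero
    · have hpow : (fun s : ℝ => max s 0 ^ n) =ᶠ[nhds s] fun r => r ^ n := by
        filter_upwards [lt_mem_nhds hs] with r hr
        rw [max_eq_left hr.le]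
      simpa [max_eq_left hs.le] using (hasDerivAt_pow n s).congr_of_eventuallyEq hpow
  rcases eq_or_ne t 0 with rfl | ht
  · exact hasDerivAt_of_hasDerivAt_of_ne hne (by fun_prop) (by fun_prop)
  · exact hne t ht

lemma integral_two_mul_comp_sub {F F' : ℝ → ℝ} (hF : ∀ t, HasDerivAt F (F' t) t)
    (hF' : Continuous F') (c a b : ℝ) :
    ∫ x in a..b, 2 * F' (c - 2 * x) = F (c - 2 * a) - F (c - 2 * b) := by
  have hderiv : ∀ x ∈ uIcc a b, HasDerivAt (fun x => -F (c - 2 * x)) (2 * F' (c - 2 * x)) x := by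
    intro x _
    have hlin : HasDerivAt (fun x : ℝ => c - 2 * x) (-2) x := by
      simpa using ((hasDerivAt_id x).const_mul 2).const_sub c
    exact ((hF (c - 2 * x)).comp x hlin).neg.congr_deriv (by ring)
  rw [intervalIntegral.integral_eq_sub_of_hasDerivAt hderiv
    (Continuous.intervalIntegrable (by fun_prop) _ _)]
  ring

theorem stmt_10 (n : ℕ) (hn : 3 ≤ n) (y : ℝ) (hy : y ∈ Icc (0:ℝ) 1) :
    (∫ x in (0:ℝ)..((1 - y)/2),
        2 * (n:ℝ) * (y ^ (n-1) + (max (y - 2*x) 0) ^ (n-1) - (max (2*y - 1) 0) ^ (n-1)))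
      + (∫ x in ((1 - y)/2)..(1/2 : ℝ), 2 * (n:ℝ) * (1 - 2*x) ^ (n-1))
      = 2 * y ^ n + (n:ℝ) * y ^ (n-1) * (1 - y)
        - (max (2*y - 1) 0) ^ n - (n:ℝ) * (max (2*y - 1) 0) ^ (n-1) * (1 - y) := by
  obtain ⟨hy0, -⟩ := hy
  have hplus : ∀ a b : ℝ, ∫ x in a..b, 2 * (n:ℝ) * max (y - 2 * x) 0 ^ (n - 1)
      = max (y - 2 * a) 0 ^ n - max (y - 2 * b) 0 ^ n := by
    intro a b
    simpa only [mul_assoc] using integral_two_mul_comp_sub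
      (hasDerivAt_max_zero_pow (by omega : 2 ≤ n)) (by fun_prop) y a b
  have hpow : ∫ x in ((1 - y)/2)..(1/2 : ℝ), 2 * (n:ℝ) * (1 - 2*x) ^ (n-1) = y ^ n := by
    simpa only [mul_assoc, show 1 - 2 * ((1 - y) / 2) = y by ring,
      show (1 : ℝ) - 2 * (1 / 2) = 0 by norm_num, zero_pow (by omega : n ≠ 0), sub_zero] using
      integral_two_mul_comp_sub (hasDerivAt_pow n) (by fun_prop) 1 ((1 - y) / 2) (1 / 2)
  have hsplit : ∀ x : ℝ,
      2 * (n:ℝ) * (y ^ (n-1) + (max (y - 2*x) 0) ^ (n-1) - (max (2*y - 1) 0) ^ (n-1))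
        = 2 * n * (y ^ (n-1) - (max (2*y - 1) 0) ^ (n-1)) + 2 * n * max (y - 2 * x) 0 ^ (n - 1) :=
    fun x => by ring
  simp only [hsplit]
  rw [intervalIntegral.integral_add (Continuous.intervalIntegrable (by fun_prop) _ _)
      (Continuous.intervalIntegrable (by fun_prop) _ _), intervalIntegral.integral_const,
    hplus, hpow, show y - 2 * ((1 - y) / 2) = 2 * y - 1 by ring, mul_zero, sub_zero, sub_zero,
    max_eq_left hy0, smul_eq_mul]
  ring
end

section
/- For every integer n ≥ 2 and every x ∈ [0,1], letting t⁺ denote max(t,0), the function f_n(x) = x^(n−1)·(n − x − n·x) + ((2x−1)⁺)^n satisfies f_n(x) ≤ 1/3. -/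
/-!
The identity `f (n + 1) x = x * f n x + (1 - x) * (x ^ n - ((2x - 1)⁺) ^ n)` writes `f (n + 1) x`
as a convex combination of `f n x` and `x ^ n - ((2x - 1)⁺) ^ n`, so by induction from `n = 2` it
suffices to bound the latter by `1 / 3`. For `x ≥ 1 / 2`, put `1 / x = 1 + d` and
`(2x - 1) / x = 1 - d`; the bound becomes `3 ≤ (1 + d) ^ n + 3 * (1 - d) ^ n`. When `n * d ≥ 2`
Bernoulli's inequality gives `(1 + d) ^ n ≥ 3`; otherwise the third-order Bernoulli bounds on both
powers leave `(1 - n * d) ^ 2 + (n ^ 2 - 4) * d ^ 2 / 3 ≥ 0`.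
-/

open Set

theorem one_add_mul_add_choose_add_choose_le_pow {R : Type*} [CommRing R] [LinearOrder R]
    [IsStrictOrderedRing R] {t : R} (ht : -1 ≤ t) (n : ℕ) :
    1 + n * t + n.choose 2 * t ^ 2 + n.choose 3 * t ^ 3 ≤ (1 + t) ^ n := by
  induction n with
  | zero => simp
  | succ n ih =>
    have hmul : (1 + n * t + n.choose 2 * t ^ 2 + n.choose 3 * t ^ 3) * (1 + t) =
        1 + ↑(n + 1) * t + (n + 1).choose 2 * t ^ 2 + (n + 1).choose 3 * t ^ 3
          + n.choose 3 * t ^ 4 := by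
      simp only [Nat.choose_succ_succ', Nat.choose_one_right]
      push_cast
      ring
    calc 1 + ↑(n + 1) * t + (n + 1).choose 2 * t ^ 2 + (n + 1).choose 3 * t ^ 3
        ≤ (1 + n * t + n.choose 2 * t ^ 2 + n.choose 3 * t ^ 3) * (1 + t) := by
          rw [hmul]
          have : (0 : R) ≤ n.choose 3 * t ^ 4 := by positivity
          linarith
      _ ≤ (1 + t) ^ n * (1 + t) := by gcongr; linarith
      _ = (1 + t) ^ (n + 1) := (pow_succ _ _).symm

section LinearOrderedField

variable {K : Type*} [Field K] [LinearOrder K] [IsStrictOrderedRing K]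

theorem three_le_one_add_pow_add_three_mul_one_sub_pow {n : ℕ} (hn : 2 ≤ n) {d : K}
    (hd₀ : -1 ≤ d) (hd₁ : d ≤ 1) : 3 ≤ (1 + d) ^ n + 3 * (1 - d) ^ n := by
  have hsub : 0 ≤ (1 - d) ^ n := pow_nonneg (by linarith) n
  rcases le_or_gt 2 (n * d) with hlarge | hsmall
  · linarith [one_add_mul_le_pow (by linarith : (-2 : K) ≤ d) n]
  have hn' : (2 : K) ≤ n := by exact_mod_cast hn
  have hc₂ : (n.choose 2 : K) = n * (n - 1) / 2 := Nat.cast_choose_two K n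
  have hc₃ : (n.choose 3 : K) = n * (n - 1) * (n - 2) / 6 := by
    have : (n.choose 3 : K) * 3 = n.choose 2 * (n - 2) := by
      exact_mod_cast Nat.choose_succ_right_eq n 2
    rw [hc₂] at this
    linear_combination this / 3
  have hplus := one_add_mul_add_choose_add_choose_le_pow hd₀ n
  have hminus := one_add_mul_add_choose_add_choose_le_pow (by linarith : (-1 : K) ≤ -d) n
  rw [hc₂, hc₃] at hplus hminus
  have hcubic : 0 ≤ (n - 1) * (n - 2) * d ^ 2 * (2 - n * d) := by
    have : (0 : K) ≤ (n - 1) * (n - 2) := mul_nonneg (by linarith) (by linarith)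
    exact mul_nonneg (mul_nonneg this (sq_nonneg d)) (by linarith)
  have hsum : 3 + (1 - n * d) ^ 2 + (n ^ 2 - 4) * d ^ 2 / 3 ≤ (1 + d) ^ n + 3 * (1 - d) ^ n := by
    rw [sub_eq_add_neg 1 d]
    linear_combination hplus + 3 * hminus + hcubic / 3
  have hrest : (0 : K) ≤ (n ^ 2 - 4) * d ^ 2 / 3 := by
    have : (4 : K) ≤ n ^ 2 := by nlinarith
    have := sq_nonneg d
    positivity
  linarith [sq_nonneg (1 - n * d)]

theorem pow_sub_two_mul_sub_one_pow_le {n : ℕ} (hn : 2 ≤ n) {x : K} (hx : 1 / 2 ≤ x) :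
    x ^ n - (2 * x - 1) ^ n ≤ 1 / 3 := by
  have hx₀ : 0 < x := by linarith
  obtain ⟨d, hd⟩ : ∃ d, d * x = 1 - x := ⟨(1 - x) / x, div_mul_cancel₀ _ hx₀.ne'⟩
  have key := three_le_one_add_pow_add_three_mul_one_sub_pow hn (d := d) (by nlinarith)
    (by nlinarith)
  have hscaled := mul_le_mul_of_nonneg_right key (pow_nonneg hx₀.le n)
  rw [add_mul, mul_assoc, ← mul_pow, ← mul_pow, (by linear_combination hd : (1 + d) * x = 1),
    (by linear_combination -hd : (1 - d) * x = 2 * x - 1), one_pow] at hscaled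
  linarith

theorem pow_sub_max_two_mul_sub_one_zero_pow_le {n : ℕ} (hn : 2 ≤ n) {x : K} (hx : 0 ≤ x) :
    x ^ n - max (2 * x - 1) 0 ^ n ≤ 1 / 3 := by
  rcases le_total x (1 / 2) with hle | hge
  · rw [max_eq_right (by linarith), zero_pow (by omega), sub_zero]
    calc x ^ n ≤ (1 / 2) ^ n := by gcongr
      _ ≤ (1 / 2) ^ 2 := pow_le_pow_of_le_one (by norm_num) (by norm_num) hn
      _ ≤ 1 / 3 := by norm_num
  · rw [max_eq_left (by linarith)]
    exact pow_sub_two_mul_sub_one_pow_le hn hge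

end LinearOrderedField

noncomputable def f (n : ℕ) (x : ℝ) : ℝ :=
  x ^ (n - 1) * ((n : ℝ) - x - n * x) + max (2 * x - 1) 0 ^ n

theorem f_succ {n : ℕ} (hn : 1 ≤ n) (x : ℝ) :
    f (n + 1) x = x * f n x + (1 - x) * (x ^ n - max (2 * x - 1) 0 ^ n) := by
  obtain ⟨m, rfl⟩ := Nat.exists_eq_add_of_le' hn
  have hmax : max (2 * x - 1) 0 * (max (2 * x - 1) 0 - (2 * x - 1)) = 0 := by
    rcases le_total (2 * x - 1) 0 with h | h
    · simp [max_eq_right h]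
    · simp [max_eq_left h]
  simp only [f, Nat.add_sub_cancel]
  push_cast
  linear_combination max (2 * x - 1) 0 ^ m * hmax

theorem f_two_le {x : ℝ} (hx : x ≤ 1) : f 2 x ≤ 1 / 3 := by
  simp only [f]
  rcases le_total (2 * x - 1) 0 with h | h
  · rw [max_eq_right h]
    nlinarith [sq_nonneg (x - 1 / 3)]
  · rw [max_eq_left h]
    nlinarith

theorem stmt_13 (n : ℕ) (hn : 2 ≤ n) (x : ℝ) (hx : x ∈ Icc (0:ℝ) 1) :
    x ^ (n-1) * ((n:ℝ) - x - (n:ℝ) * x) + (max (2*x - 1) 0) ^ n ≤ 1/3 := by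
  change f n x ≤ 1 / 3
  induction n, hn using Nat.le_induction with
  | base => exact f_two_le hx.2
  | succ n hn ih =>
    have hg := pow_sub_max_two_mul_sub_one_zero_pow_le hn hx.1
    calc f (n + 1) x = x * f n x + (1 - x) * (x ^ n - max (2 * x - 1) 0 ^ n) := f_succ (by omega) x
      _ ≤ x * (1 / 3) + (1 - x) * (1 / 3) := by
        gcongr
        · exact hx.1
        · linarith [hx.2]
      _ = 1 / 3 := by ring
end

section
/- For every integer n ≥ 2 and every x ∈ [0,1], letting t⁺ denote max(t,0), the function g_n(x) = (1−x)·n·( ((2x−1)⁺)^(n−1) − ((4x−3)⁺)^(n−1) ) satisfies g_n(x) ≤ 1/4. -/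
open Set

/-! Dropping the nonnegative `(4x - 3)⁺` term and substituting `u = 2x - 1`, the bound becomes
`n (1 - u) u ^ (n - 1) ≤ 1 / 2` on `[0, 1]`. AM-GM bounds the left side by `(1 - 1 / n) ^ (n - 1)`,
and Bernoulli's inequality gives `(1 + 1 / (n - 1)) ^ (n - 1) ≥ 2`. -/

/- AM-GM for `m` copies of `a` and one `b`, derived from Bernoulli's inequality
`1 + (m + 1) t ≤ (1 + t) ^ (m + 1)` at `1 + t = A / a`, where `A` is the mean. -/
theorem pow_mul_le_mean_pow {a b : ℝ} (ha : 0 ≤ a) (hb : 0 ≤ b) (m : ℕ) :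
    a ^ m * b ≤ ((m * a + b) / (m + 1)) ^ (m + 1) := by
  rcases ha.eq_or_lt with rfl | ha
  · rcases m with _ | m
    · simp
    · simp only [pow_succ, mul_zero, zero_mul]
      positivity
  set A := (m * a + b) / (m + 1)
  have hA : A / a - 1 = (b - a) / ((m + 1) * a) := by
    simp only [A]; field_simp; ring
  have hbern := one_add_mul_le_pow (a := A / a - 1) (by
    rw [hA, le_div_iff₀ (by positivity)]
    nlinarith [(Nat.cast_nonneg m : (0 : ℝ) ≤ m)]) (m + 1)
  have hlhs : 1 + ((m + 1 : ℕ) : ℝ) * (A / a - 1) = b / a := by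
    rw [hA]; push_cast; field_simp; ring
  rw [hlhs, add_sub_cancel, div_pow, div_le_div_iff₀ ha (by positivity)] at hbern
  calc a ^ m * b = b * a ^ (m + 1) / a := by field_simp; ring
    _ ≤ A ^ (m + 1) * a / a := by gcongr
    _ = A ^ (m + 1) := mul_div_cancel_right₀ _ ha.ne'

theorem succ_mul_one_sub_mul_pow_le {u : ℝ} (hu₀ : 0 ≤ u) (hu₁ : u ≤ 1) (m : ℕ) :
    (m + 1) * (1 - u) * u ^ m ≤ (m / (m + 1)) ^ m := by
  rcases m.eq_zero_or_pos with rfl | hm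
  · simp [hu₀]
  have hm : (0 : ℝ) < m := by exact_mod_cast hm
  have h := pow_mul_le_mean_pow hu₀ (mul_nonneg hm.le (sub_nonneg.2 hu₁)) m
  have hmean : (m * u + m * (1 - u)) / (m + 1) = m / (m + 1) := by ring
  rw [hmean, pow_succ] at h
  rw [← mul_le_mul_iff_of_pos_right (show (0 : ℝ) < m / (m + 1) by positivity)]
  calc (m + 1) * (1 - u) * u ^ m * (m / (m + 1)) = u ^ m * (m * (1 - u)) := by
        field_simp
    _ ≤ _ := h

theorem div_succ_pow_le_half {m : ℕ} (hm : 1 ≤ m) : ((m : ℝ) / (m + 1)) ^ m ≤ 1 / 2 := by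
  have hm : (0 : ℝ) < m := by exact_mod_cast hm
  have hbern := one_add_mul_le_pow (a := 1 / (m : ℝ)) (by linarith [one_div_pos.2 hm]) m
  rw [mul_one_div_cancel hm.ne'] at hbern
  have hinv : (m : ℝ) / (m + 1) = (1 + 1 / (m : ℝ))⁻¹ := by field_simp
  rw [hinv, inv_pow, inv_le_comm₀ (by positivity) (by norm_num)]
  linarith

theorem succ_mul_one_sub_mul_pow_le_half {u : ℝ} (hu₀ : 0 ≤ u) (hu₁ : u ≤ 1) {m : ℕ}
    (hm : 1 ≤ m) : (m + 1) * (1 - u) * u ^ m ≤ 1 / 2 :=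
  (succ_mul_one_sub_mul_pow_le hu₀ hu₁ m).trans (div_succ_pow_le_half hm)

theorem stmt_14 (n : ℕ) (hn : 2 ≤ n) (x : ℝ) (hx : x ∈ Icc (0:ℝ) 1) :
    (1 - x) * (n:ℝ) * ((max (2*x - 1) 0) ^ (n-1) - (max (4*x - 3) 0) ^ (n-1)) ≤ 1/4 := by
  obtain ⟨hx₀, hx₁⟩ := hx
  obtain ⟨m, rfl⟩ : ∃ m, n = m + 1 := ⟨n - 1, by omega⟩
  have hm : 1 ≤ m := by omega
  simp only [add_tsub_cancel_right, Nat.cast_succ]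
  have hdrop : 0 ≤ (1 - x) * (m + 1) * max (4 * x - 3) 0 ^ m := by
    have := le_max_right (4 * x - 3) 0
    have : 0 ≤ 1 - x := by linarith
    positivity
  rcases le_or_gt x (1 / 2) with hx_le | hx_gt
  · rw [max_eq_right (by linarith), zero_pow (by omega)]
    linarith
  · rw [max_eq_left (by linarith : (0 : ℝ) ≤ 2 * x - 1)]
    have key := succ_mul_one_sub_mul_pow_le_half (u := 2 * x - 1) (by linarith) (by linarith) hm
    linarith
end

section
/- Let n ≥ 2 be an integer and let F : [0,1] → ℝ be measurable with 0 ≤ F(z) ≤ 1 for all z ∈ [0,1]. Then the function ΩF(x) = n·x^(n-1) − (n−1)·x^n − 2n(n−1)·∫_{max(2x−1,0)}^{x} y^(n−2) · ( ∫₀^{(1+y)/2 − x} F(z) dz ) dy satisfies x^n ≤ ΩF(x) ≤ n·x^(n-1) − (n−1)·x^n for all x ∈ [0,1]. -/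
open Set MeasureTheory

/-! The inner integral is an integral of a `[0,1]`-valued function over an interval of length
at most `(1 - x)/2`, so `0 ≤ ∫ y^(n-2) (…) dy ≤ (1 - x)/2 · x^(n-1)/(n-1)`. Hence the correction
term `2n(n-1)·∫…` lies between `0` and `n x^(n-1) (1 - x)`, which gives both bounds. -/

theorem intervalIntegral.integral_mono_on_of_nonneg {μ : Measure ℝ} {f g : ℝ → ℝ} {a b : ℝ}
    (hab : a ≤ b) (hg : IntervalIntegrable g μ a b) (hf : ∀ x ∈ Icc a b, 0 ≤ f x)
    (hfg : ∀ x ∈ Icc a b, f x ≤ g x) :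
    ∫ x in a..b, f x ∂μ ≤ ∫ x in a..b, g x ∂μ := by
  rw [intervalIntegral.integral_of_le hab, intervalIntegral.integral_of_le hab]
  exact integral_mono_of_nonneg
    (ae_restrict_of_forall_mem measurableSet_Ioc fun x hx => hf x (Ioc_subset_Icc_self hx))
    ((intervalIntegrable_iff_integrableOn_Ioc_of_le hab).1 hg)
    (ae_restrict_of_forall_mem measurableSet_Ioc fun x hx => hfg x (Ioc_subset_Icc_self hx))

theorem intervalIntegral.integral_mem_Icc_of_nonneg_of_le_one {F : ℝ → ℝ} {c : ℝ} (hc : 0 ≤ c)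
    (hF : ∀ z ∈ Icc 0 c, 0 ≤ F z ∧ F z ≤ 1) :
    ∫ z in (0:ℝ)..c, F z ∈ Icc 0 c := by
  constructor
  · exact intervalIntegral.integral_nonneg hc fun z hz => (hF z hz).1
  · simpa using intervalIntegral.integral_mono_on_of_nonneg hc
      (intervalIntegrable_const (μ := volume)) (fun z hz => (hF z hz).1) (fun z hz => (hF z hz).2)

theorem sojourn_integral_mem_Icc (k : ℕ) {F : ℝ → ℝ} (hF : ∀ z ∈ Icc (0:ℝ) 1, 0 ≤ F z ∧ F z ≤ 1)
    {x : ℝ} (hx : x ∈ Icc (0:ℝ) 1) :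
    ∫ y in (max (2*x - 1) 0)..x, y ^ k * ∫ z in (0:ℝ)..((1 + y)/2 - x), F z
      ∈ Icc 0 ((1 - x) * x ^ (k + 1) / (2 * (k + 1))) := by
  obtain ⟨hx0, hx1⟩ := hx
  set a := max (2*x - 1) 0
  have ha0 : 0 ≤ a := le_max_right _ _
  have hax : a ≤ x := max_le (by linarith) hx0
  have hinner : ∀ y ∈ Icc a x, ∫ z in (0:ℝ)..((1 + y)/2 - x), F z ∈ Icc 0 ((1 - x)/2) := by
    intro y ⟨hay, hyx⟩
    have hc0 : 0 ≤ (1 + y)/2 - x := by linarith [le_max_left (2*x - 1) 0]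
    have hc : (1 + y)/2 - x ≤ (1 - x)/2 := by linarith
    obtain ⟨h0, h1⟩ := intervalIntegral.integral_mem_Icc_of_nonneg_of_le_one hc0
      fun z hz => hF z ⟨hz.1, by linarith [hz.2]⟩
    exact ⟨h0, h1.trans hc⟩
  have hpow : ∀ y ∈ Icc a x, 0 ≤ y ^ k := fun y hy => pow_nonneg (ha0.trans hy.1) k
  refine ⟨intervalIntegral.integral_nonneg hax fun y hy =>
    mul_nonneg (hpow y hy) (hinner y hy).1, ?_⟩
  calc _ ≤ ∫ y in a..x, y ^ k * ((1 - x)/2) :=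
        intervalIntegral.integral_mono_on_of_nonneg hax
          (((continuous_pow k).mul continuous_const).intervalIntegrable _ _)
          (fun y hy => mul_nonneg (hpow y hy) (hinner y hy).1)
          (fun y hy => mul_le_mul_of_nonneg_left (hinner y hy).2 (hpow y hy))
    _ = (x ^ (k + 1) - a ^ (k + 1)) / (k + 1) * ((1 - x)/2) := by
        rw [intervalIntegral.integral_mul_const, integral_pow]
    _ ≤ x ^ (k + 1) / (k + 1) * ((1 - x)/2) := by
        gcongr
        exact sub_le_self _ (pow_nonneg ha0 _)
    _ = (1 - x) * x ^ (k + 1) / (2 * (k + 1)) := by field_simp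

theorem stmt_15_general (n : ℕ) (hn : 2 ≤ n) (F : ℝ → ℝ)
    (hF : ∀ z ∈ Icc (0:ℝ) 1, 0 ≤ F z ∧ F z ≤ 1)
    (x : ℝ) (hx : x ∈ Icc (0:ℝ) 1) :
    x ^ n ≤ (n:ℝ) * x ^ (n-1) - ((n:ℝ) - 1) * x ^ n
        - 2 * (n:ℝ) * ((n:ℝ) - 1) *
          (∫ y in (max (2*x - 1) 0)..x, y ^ (n-2) * ∫ z in (0:ℝ)..((1 + y)/2 - x), F z) ∧
    (n:ℝ) * x ^ (n-1) - ((n:ℝ) - 1) * x ^ n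
        - 2 * (n:ℝ) * ((n:ℝ) - 1) *
          (∫ y in (max (2*x - 1) 0)..x, y ^ (n-2) * ∫ z in (0:ℝ)..((1 + y)/2 - x), F z)
      ≤ (n:ℝ) * x ^ (n-1) - ((n:ℝ) - 1) * x ^ n := by
  obtain ⟨k, rfl⟩ : ∃ k, n = k + 2 := ⟨n - 2, by omega⟩
  obtain ⟨hI0, hI1⟩ := sojourn_integral_mem_Icc k hF hx
  simp only [Nat.add_sub_cancel, Nat.add_succ_sub_one] 
  set I := ∫ y in (max (2*x - 1) 0)..x, y ^ k * ∫ z in (0:ℝ)..((1 + y)/2 - x), F z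
  push_cast
  have hkey : 2 * ((k:ℝ) + 2) * ((k:ℝ) + 2 - 1) * I ≤ ((k:ℝ) + 2) * (1 - x) * x ^ (k + 1) := by
    rw [le_div_iff₀ (by positivity)] at hI1
    nlinarith
  constructor
  · nlinarith [pow_succ x (k + 1)]
  · nlinarith [mul_nonneg (by positivity : (0:ℝ) ≤ ((k:ℝ) + 2) * (k + 1)) hI0]

theorem stmt_15 (n : ℕ) (hn : 2 ≤ n) (F : ℝ → ℝ) (hm : Measurable F)
    (hF : ∀ z ∈ Icc (0:ℝ) 1, 0 ≤ F z ∧ F z ≤ 1)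
    (x : ℝ) (hx : x ∈ Icc (0:ℝ) 1) :
    x ^ n ≤ (n:ℝ) * x ^ (n-1) - ((n:ℝ) - 1) * x ^ n
        - 2 * (n:ℝ) * ((n:ℝ) - 1) *
          (∫ y in (max (2*x - 1) 0)..x, y ^ (n-2) * ∫ z in (0:ℝ)..((1 + y)/2 - x), F z) ∧
    (n:ℝ) * x ^ (n-1) - ((n:ℝ) - 1) * x ^ n
        - 2 * (n:ℝ) * ((n:ℝ) - 1) *
          (∫ y in (max (2*x - 1) 0)..x, y ^ (n-2) * ∫ z in (0:ℝ)..((1 + y)/2 - x), F z)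
      ≤ (n:ℝ) * x ^ (n-1) - ((n:ℝ) - 1) * x ^ n :=
  stmt_15_general n hn F hF x hx
end

section
/- For every integer n ≥ 2, there exists a unique bounded measurable function F : [0,1] → ℝ satisfying F(x) = n·x^(n-1) − (n−1)·x^n − 2n(n−1)·∫_{max(2x−1,0)}^{x} y^(n−2) · ( ∫₀^{(1+y)/2 − x} F(z) dz ) dy for all x ∈ [0,1]. -/
/-! Write `Ω F = p - 2n(n-1) I F` with `I` linear. If `|F| ≤ B` on `[0, 1]`, the inner integral
in `I F (x)` runs over an interval of length `(1 + y)/2 - x ≤ (1 - x)/2`, so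
`|Ω F - Ω G| (x) ≤ n x^(n-1) (1 - x) B ≤ B / 2`; the last step is the maximum
`((n-1)/n)^(n-1) ≤ 1/2` of `n x^(n-1) (1 - x)`, which follows from Bernoulli's inequality.
Hence `Ω` is a `1/2`-contraction. Banach's theorem on bounded continuous functions gives a
solution, and the same estimate applied to two bounded measurable solutions bounds their
distance on `[0, 1]` by half of any bound for it, so they agree there. -/

/- Tangent line of `a ↦ a^(k+1)` at `x`: Bernoulli's inequality for `a / x`. -/
theorem mul_pow_le_pow_succ_add_mul_pow_succ {a x : ℝ} (ha : 0 ≤ a) (hx : 0 ≤ x) (k : ℕ) :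
    (k + 1) * a * x ^ k ≤ a ^ (k + 1) + k * x ^ (k + 1) := by
  rcases hx.eq_or_lt with rfl | hx
  · rcases k with _ | k <;> simp; positivity
  have hbern := one_add_mul_sub_le_pow (a := a / x) (by linarith [div_nonneg ha hx.le]) (k + 1)
  have := mul_le_mul_of_nonneg_left hbern (pow_nonneg hx.le (k + 1))
  rw [div_pow, mul_div_cancel₀ _ (by positivity)] at this
  have e : x ^ (k + 1) * (1 + ((k + 1 : ℕ) : ℝ) * (a / x - 1))
      = (k + 1) * a * x ^ k - k * x ^ (k + 1) := by
    field_simp; push_cast; ring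
  linarith

theorem natCast_mul_pow_mul_one_sub_le_half {n : ℕ} (hn : 2 ≤ n) {x : ℝ} (hx : 0 ≤ x) :
    n * x ^ (n - 1) * (1 - x) ≤ 1 / 2 := by
  obtain ⟨k, rfl⟩ : ∃ k, n = k + 1 := ⟨n - 1, by omega⟩
  have hk : (1 : ℝ) ≤ k := by exact_mod_cast (show 1 ≤ k by omega)
  have hk0 : (0 : ℝ) < k := by linarith
  -- `a = k / (k + 1)` maximises `x ^ k * (1 - x)`.
  set a : ℝ := k / (k + 1)
  have ha : a * (1 + 1 / (k : ℝ)) = 1 := by simp only [a]; field_simp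
  have hpow : a ^ k ≤ 1 / 2 := by
    have hbern := one_add_mul_le_pow (a := 1 / (k : ℝ)) (by linarith [one_div_pos.2 hk0]) k
    rw [mul_one_div_cancel hk0.ne', one_add_one_eq_two] at hbern
    have : a ^ k * (1 + 1 / (k : ℝ)) ^ k = 1 := by rw [← mul_pow, ha, one_pow]
    nlinarith [pow_nonneg (show 0 ≤ a by positivity) k]
  have htangent := mul_pow_le_pow_succ_add_mul_pow_succ (a := a) (by positivity) hx k
  have hka : ((k : ℝ) + 1) * a = k := by simp only [a]; field_simp
  have hbound : x ^ k * (1 - x) ≤ a ^ k / (k + 1) := by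
    refine le_of_mul_le_mul_left ?_ hk0
    have : (k : ℝ) * (a ^ k / (k + 1)) = a ^ (k + 1) := by
      rw [pow_succ]; simp only [a]; ring
    rw [hka] at htangent
    linarith [show (k : ℝ) * (x ^ k * (1 - x)) = k * x ^ k - k * x ^ (k + 1) by ring]
  rw [Nat.add_sub_cancel]; push_cast
  rw [le_div_iff₀ (by linarith)] at hbound
  linarith

open Set MeasureTheory intervalIntegral Filter Topology BoundedContinuousFunction

theorem eq_zero_of_abs_le_imp_abs_le_half {α : Type*} {s : Set α} {d : α → ℝ} {C : ℝ}
    (hC : ∀ x ∈ s, |d x| ≤ C) (hhalf : ∀ B, (∀ x ∈ s, |d x| ≤ B) → ∀ x ∈ s, |d x| ≤ B / 2) :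
    ∀ x ∈ s, d x = 0 := by
  have hiter : ∀ k : ℕ, ∀ x ∈ s, |d x| ≤ C * (1 / 2) ^ k := by
    intro k
    induction k with
    | zero => simpa using hC
    | succ k ih =>
      intro x hx
      rw [pow_succ, ← mul_assoc, mul_one_div]
      exact hhalf _ ih x hx
  have hlim : Tendsto (fun k : ℕ => C * (1 / 2 : ℝ) ^ k) atTop (𝓝 0) := by
    simpa using
      (tendsto_pow_atTop_nhds_zero_of_lt_one (r := (1 / 2 : ℝ)) (by norm_num) (by norm_num)).const_mul C
  exact fun x hx => abs_eq_zero.1 <|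
    le_antisymm (ge_of_tendsto' hlim fun k => hiter k x hx) (abs_nonneg _)

namespace Carousel

noncomputable def innerIntegral (n : ℕ) (F : ℝ → ℝ) (x : ℝ) : ℝ :=
  ∫ y in (max (2*x - 1) 0)..x, y ^ (n-2) * ∫ z in (0:ℝ)..((1 + y)/2 - x), F z

noncomputable def sojournOp (n : ℕ) (F : ℝ → ℝ) (x : ℝ) : ℝ :=
  (n:ℝ) * x ^ (n-1) - ((n:ℝ) - 1) * x ^ n - 2 * (n:ℝ) * ((n:ℝ) - 1) * innerIntegral n F x

variable {n : ℕ} {F G H : ℝ → ℝ} {x y B : ℝ}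

theorem one_add_div_two_sub_mem_Icc (hy : y ∈ Icc (max (2*x - 1) 0) x) :
    (1 + y)/2 - x ∈ Icc 0 ((1 - x)/2) := by
  have := le_max_left (2*x - 1) 0
  constructor <;> linarith [hy.1, hy.2]

theorem max_two_mul_sub_one_zero_le (hx : x ∈ Icc (0:ℝ) 1) : max (2*x - 1) 0 ≤ x :=
  max_le (by linarith [hx.2]) hx.1

theorem abs_innerIntegral_le (hn : 2 ≤ n) (hB : ∀ z ∈ Icc (0:ℝ) 1, |H z| ≤ B)
    (hx : x ∈ Icc (0:ℝ) 1) :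
    |innerIntegral n H x| ≤ B * (1 - x) / 2 * (x ^ (n-1) / ((n:ℝ) - 1)) := by
  have hB0 : 0 ≤ B := (abs_nonneg _).trans (hB 0 ⟨le_rfl, zero_le_one⟩)
  have hpoint : ∀ y ∈ Ioc (max (2*x - 1) 0) x,
      ‖y ^ (n-2) * ∫ z in (0:ℝ)..((1 + y)/2 - x), H z‖ ≤ B * (1 - x) / 2 * y ^ (n-2) := by
    intro y hy
    obtain ⟨ht0, ht1⟩ := one_add_div_two_sub_mem_Icc (Ioc_subset_Icc_self hy)
    have hy0 : 0 ≤ y := (le_max_right _ _).trans hy.1.le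
    have hprim : ‖∫ z in (0:ℝ)..((1 + y)/2 - x), H z‖ ≤ B * |(1 + y)/2 - x - 0| :=
      norm_integral_le_of_norm_le_const fun z hz => by
        rw [uIoc_of_le ht0] at hz
        exact hB z ⟨hz.1.le, by linarith [hz.2, hx.1]⟩
    rw [sub_zero, abs_of_nonneg ht0] at hprim
    rw [norm_mul, Real.norm_of_nonneg (pow_nonneg hy0 _)]
    calc y ^ (n-2) * ‖∫ z in (0:ℝ)..((1 + y)/2 - x), H z‖
        ≤ y ^ (n-2) * (B * ((1 - x)/2)) := by gcongr; exact hprim.trans (by gcongr)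
      _ = B * (1 - x) / 2 * y ^ (n-2) := by ring
  have hint : ∀ a b : ℝ, IntervalIntegrable (fun y => B * (1 - x) / 2 * y ^ (n-2)) volume a b :=
    fun a b => (continuous_const.mul (continuous_pow _)).intervalIntegrable a b
  have hcast : ((n - 2 : ℕ) : ℝ) + 1 = n - 1 := by
    rw [Nat.cast_sub hn]; push_cast; ring
  calc |innerIntegral n H x|
      ≤ ∫ y in (max (2*x - 1) 0)..x, B * (1 - x) / 2 * y ^ (n-2) :=
        norm_integral_le_of_norm_le (max_two_mul_sub_one_zero_le hx) (ae_of_all _ hpoint) (hint _ _)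
    _ ≤ ∫ y in (0:ℝ)..x, B * (1 - x) / 2 * y ^ (n-2) := by
        refine integral_mono_interval (le_max_right _ _) (max_two_mul_sub_one_zero_le hx) le_rfl
          (ae_restrict_of_forall_mem measurableSet_Ioc fun y hy => ?_) (hint _ _)
        exact mul_nonneg (div_nonneg (mul_nonneg hB0 (sub_nonneg.2 hx.2)) zero_le_two)
          (pow_nonneg hy.1.le _)
    _ = B * (1 - x) / 2 * (x ^ (n-1) / ((n:ℝ) - 1)) := by
        rw [intervalIntegral.integral_const_mul, integral_pow, hcast,
          show n - 2 + 1 = n - 1 by omega, zero_pow (by omega), sub_zero]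

theorem intervalIntegrable_innerIntegrand (hF : IntegrableOn F (Icc (0:ℝ) 1))
    (hx : x ∈ Icc (0:ℝ) 1) :
    IntervalIntegrable (fun y => y ^ (n-2) * ∫ z in (0:ℝ)..((1 + y)/2 - x), F z) volume
      (max (2*x - 1) 0) x := by
  have hprim : ContinuousOn (fun t => ∫ z in (0:ℝ)..t, F z) (Icc 0 1) := by
    simpa only [uIcc_of_le zero_le_one] using
      continuousOn_primitive_interval (a := 0) (b := 1) (by rwa [uIcc_of_le zero_le_one])
  refine ContinuousOn.intervalIntegrable_of_Icc (max_two_mul_sub_one_zero_le hx) ?_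
  refine (continuousOn_pow _).mul (hprim.comp (by fun_prop) fun y hy => ?_)
  obtain ⟨ht0, ht1⟩ := one_add_div_two_sub_mem_Icc hy
  exact ⟨ht0, by linarith [hx.1]⟩

theorem innerIntegral_sub (hF : IntegrableOn F (Icc (0:ℝ) 1))
    (hG : IntegrableOn G (Icc (0:ℝ) 1)) (hx : x ∈ Icc (0:ℝ) 1) :
    innerIntegral n F x - innerIntegral n G x = innerIntegral n (F - G) x := by
  rw [innerIntegral, innerIntegral, ← integral_sub (intervalIntegrable_innerIntegrand hF hx)
    (intervalIntegrable_innerIntegrand hG hx)]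
  refine integral_congr fun y hy => ?_
  rw [uIcc_of_le (max_two_mul_sub_one_zero_le hx)] at hy
  obtain ⟨ht0, ht1⟩ := one_add_div_two_sub_mem_Icc hy
  have hsub : Icc 0 ((1 + y)/2 - x) ⊆ Icc 0 1 := Icc_subset_Icc le_rfl (by linarith [hx.1])
  have hFi := (intervalIntegrable_iff_integrableOn_Icc_of_le ht0).2 (hF.mono_set hsub)
  have hGi := (intervalIntegrable_iff_integrableOn_Icc_of_le ht0).2 (hG.mono_set hsub)
  rw [← mul_sub, ← integral_sub hFi hGi]
  rfl

theorem abs_sojournOp_sub_le (hn : 2 ≤ n) (hF : IntegrableOn F (Icc (0:ℝ) 1))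
    (hG : IntegrableOn G (Icc (0:ℝ) 1)) (hB : ∀ z ∈ Icc (0:ℝ) 1, |F z - G z| ≤ B)
    (hx : x ∈ Icc (0:ℝ) 1) :
    |sojournOp n F x - sojournOp n G x| ≤ B / 2 := by
  have hB0 : 0 ≤ B := (abs_nonneg _).trans (hB 0 ⟨le_rfl, zero_le_one⟩)
  have hn' : (2:ℝ) ≤ n := by exact_mod_cast hn
  have hc : 0 ≤ 2 * (n:ℝ) * ((n:ℝ) - 1) := by nlinarith
  have hdiff : sojournOp n F x - sojournOp n G x
      = -(2 * (n:ℝ) * ((n:ℝ) - 1) * innerIntegral n (F - G) x) := by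
    rw [← innerIntegral_sub hF hG hx, sojournOp, sojournOp]; ring
  rw [hdiff, abs_neg, abs_mul, abs_of_nonneg hc]
  calc 2 * (n:ℝ) * ((n:ℝ) - 1) * |innerIntegral n (F - G) x|
      ≤ 2 * (n:ℝ) * ((n:ℝ) - 1) * (B * (1 - x) / 2 * (x ^ (n-1) / ((n:ℝ) - 1))) :=
        mul_le_mul_of_nonneg_left (abs_innerIntegral_le hn hB hx) hc
    _ = n * x ^ (n-1) * (1 - x) * B := by field_simp [show (n:ℝ) - 1 ≠ 0 by linarith]
    _ ≤ 1 / 2 * B :=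
        mul_le_mul_of_nonneg_right (natCast_mul_pow_mul_one_sub_le_half hn hx.1) hB0
    _ = B / 2 := one_div_mul_eq_div 2 B

theorem continuous_innerIntegral (hF : Continuous F) : Continuous (innerIntegral n F) := by
  have hprim : Continuous fun t => ∫ z in (0:ℝ)..t, F z :=
    continuous_primitive (fun a b => hF.intervalIntegrable a b) 0
  have hf : Continuous (Function.uncurry
      fun x y : ℝ => y ^ (n-2) * ∫ z in (0:ℝ)..((1 + y)/2 - x), F z) := by
    fun_prop
  have hsplit : innerIntegral n F = fun x =>
      (∫ y in (0:ℝ)..x, y ^ (n-2) * ∫ z in (0:ℝ)..((1 + y)/2 - x), F z)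
        - ∫ y in (0:ℝ)..(max (2*x - 1) 0), y ^ (n-2) * ∫ z in (0:ℝ)..((1 + y)/2 - x), F z := by
    funext x
    have hint : ∀ a b : ℝ, IntervalIntegrable
        (fun y => y ^ (n-2) * ∫ z in (0:ℝ)..((1 + y)/2 - x), F z) volume a b :=
      fun a b => (hf.uncurry_left x).intervalIntegrable a b
    rw [innerIntegral, integral_interval_sub_left (hint _ _) (hint _ _)]
  rw [hsplit]
  exact (continuous_parametric_intervalIntegral_of_continuous hf continuous_id).sub
    (continuous_parametric_intervalIntegral_of_continuous hf (by fun_prop))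

theorem continuous_sojournOp (hF : Continuous F) : Continuous (sojournOp n F) := by
  have := continuous_innerIntegral (n := n) hF
  unfold sojournOp
  fun_prop

/- `Ω F` is continued constantly outside `[0, 1]`, so that `Ω` acts on the complete space
`ℝ →ᵇ ℝ`. -/
noncomputable def sojournOpBCF (n : ℕ) (F : ℝ →ᵇ ℝ) : ℝ →ᵇ ℝ :=
  (mkOfCompact ((⟨sojournOp n F, continuous_sojournOp F.continuous⟩ : C(ℝ, ℝ)).restrict
      (Icc 0 1))).compContinuous ⟨projIcc 0 1 zero_le_one, continuous_projIcc⟩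

theorem sojournOpBCF_apply (F : ℝ →ᵇ ℝ) (x : ℝ) :
    sojournOpBCF n F x = sojournOp n F (projIcc 0 1 zero_le_one x) := rfl

theorem contractingWith_sojournOpBCF (hn : 2 ≤ n) :
    ContractingWith (1 / 2) (sojournOpBCF n) := by
  refine ⟨by norm_num, LipschitzWith.of_dist_le_mul fun F G => ?_⟩
  refine (BoundedContinuousFunction.dist_le (by positivity)).2 fun x => ?_
  rw [sojournOpBCF_apply, sojournOpBCF_apply, Real.dist_eq, NNReal.coe_div, NNReal.coe_one,
    NNReal.coe_two, one_div_mul_eq_div]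
  exact abs_sojournOp_sub_le hn F.continuous.integrableOn_Icc G.continuous.integrableOn_Icc
    (fun z _ => (Real.dist_eq _ _).symm.trans_le (dist_coe_le_dist z))
    (projIcc 0 1 zero_le_one x).2

theorem integrableOn_Icc_of_abs_le {a b C : ℝ} (hFm : Measurable F)
    (hC : ∀ x ∈ Icc a b, |F x| ≤ C) : IntegrableOn F (Icc a b) :=
  Measure.integrableOn_of_bounded measure_Icc_lt_top.ne hFm.aestronglyMeasurable
    (ae_restrict_of_forall_mem measurableSet_Icc hC)

theorem eqOn_of_eq_sojournOp (hn : 2 ≤ n) (hFm : Measurable F) (hGm : Measurable G)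
    (hFb : ∃ C, ∀ x ∈ Icc (0:ℝ) 1, |F x| ≤ C) (hGb : ∃ C, ∀ x ∈ Icc (0:ℝ) 1, |G x| ≤ C)
    (hF : ∀ x ∈ Icc (0:ℝ) 1, F x = sojournOp n F x)
    (hG : ∀ x ∈ Icc (0:ℝ) 1, G x = sojournOp n G x) :
    EqOn F G (Icc 0 1) := by
  obtain ⟨CF, hCF⟩ := hFb
  obtain ⟨CG, hCG⟩ := hGb
  have hzero := eq_zero_of_abs_le_imp_abs_le_half (d := F - G) (C := CF + CG)
    (fun x hx => (abs_sub _ _).trans (add_le_add (hCF x hx) (hCG x hx)))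
    fun B hB x hx => by
      simpa only [Pi.sub_apply, ← hF x hx, ← hG x hx] using
        abs_sojournOp_sub_le hn (integrableOn_Icc_of_abs_le hFm hCF)
          (integrableOn_Icc_of_abs_le hGm hCG) hB hx
  exact fun x hx => sub_eq_zero.1 (hzero x hx)

end Carousel

theorem stmt_19 (n : ℕ) (hn : 2 ≤ n) :
    ∃ F : ℝ → ℝ,
      (Measurable F ∧ (∃ C : ℝ, ∀ x ∈ Icc (0:ℝ) 1, |F x| ≤ C) ∧
        ∀ x ∈ Icc (0:ℝ) 1,
          F x = (n:ℝ) * x ^ (n-1) - ((n:ℝ) - 1) * x ^ n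
            - 2 * (n:ℝ) * ((n:ℝ) - 1) *
              ∫ y in (max (2*x - 1) 0)..x, y ^ (n-2) * ∫ z in (0:ℝ)..((1 + y)/2 - x), F z) ∧
      ∀ G : ℝ → ℝ,
        (Measurable G ∧ (∃ C : ℝ, ∀ x ∈ Icc (0:ℝ) 1, |G x| ≤ C) ∧
          ∀ x ∈ Icc (0:ℝ) 1,
            G x = (n:ℝ) * x ^ (n-1) - ((n:ℝ) - 1) * x ^ n
              - 2 * (n:ℝ) * ((n:ℝ) - 1) *
                ∫ y in (max (2*x - 1) 0)..x, y ^ (n-2) * ∫ z in (0:ℝ)..((1 + y)/2 - x), G z) →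
        ∀ x ∈ Icc (0:ℝ) 1, G x = F x := by
  have hcontr := Carousel.contractingWith_sojournOpBCF hn
  obtain ⟨Φ, hfix⟩ : ∃ Φ, Carousel.sojournOpBCF n Φ = Φ :=
    ⟨_, ContractingWith.fixedPoint_isFixedPt hcontr⟩
  have hΦ : ∀ x ∈ Icc (0:ℝ) 1, Φ x = Carousel.sojournOp n Φ x := fun x hx => by
    conv_lhs => rw [← hfix]
    rw [Carousel.sojournOpBCF_apply, projIcc_of_mem _ hx]
  have hΦb : ∃ C, ∀ x ∈ Icc (0:ℝ) 1, |Φ x| ≤ C := ⟨‖Φ‖, fun x _ => Φ.norm_coe_le_norm x⟩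
  refine ⟨Φ, ⟨Φ.continuous.measurable, hΦb, hΦ⟩, fun G ⟨hGm, hGb, hG⟩ => ?_⟩
  exact Carousel.eqOn_of_eq_sojournOp hn hGm Φ.continuous.measurable hGb hΦb hG hΦ
end
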